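/- For every nonnegative integer n, three times the number of integer solutions (x,y,z) to x² + 2y² + 2z² = 4n+1 equals the number of integer solutions to x² + y² + z² = 4n+1, and three times the number of integer solutions to x² + 2y² + 2z² = 4n+2 equals the number of integer solutions to x² + y² + z² = 4n+2. -/

import Mathlib

/-!
Write `m = 4n + 1` or `4n + 2`. Since `x ^ 2 ≡ x % 2 (mod 4)`, a solution of `a² + b² + c² = m`
has exactly `m % 4 ∈ {1, 2}` odd coordinates, so exactly one coordinate has a parity different
from the other two. Solutions with that coordinate in a fixed position and the other two `b ≡ c`
(mod 2) correspond to solutions of `x² + 2y² + 2z² = m` via `(x, y, z) ↦ (x, y + z, y - z)`;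
the three possible positions give the factor 3.
-/

abbrev Reps111 (m : ℤ) := {p : ℤ × ℤ × ℤ // p.1 ^ 2 + p.2.1 ^ 2 + p.2.2 ^ 2 = m}

abbrev Reps122 (m : ℤ) := {p : ℤ × ℤ × ℤ // p.1 ^ 2 + 2 * p.2.1 ^ 2 + 2 * p.2.2 ^ 2 = m}

theorem Int.sq_emod_four (x : ℤ) : x ^ 2 % 4 = x % 2 := by
  rcases Int.even_or_odd' x with ⟨k, rfl | rfl⟩
  · have : (2 * k) ^ 2 = 4 * (k * k) := by ring
    omega
  · have : (2 * k + 1) ^ 2 = 4 * (k * k + k) + 1 := by ring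
    omega

theorem emod_two_add_emod_two_add_emod_two {a b c m : ℤ} (h : a ^ 2 + b ^ 2 + c ^ 2 = m) :
    a % 2 + b % 2 + c % 2 = m % 4 := by
  have ha := Int.sq_emod_four a
  have hb := Int.sq_emod_four b
  have hc := Int.sq_emod_four c
  omega

theorem emod_two_ne_of_sq_add_sq_add_sq {a b c m : ℤ} (hm : m % 4 = 1 ∨ m % 4 = 2)
    (h : a ^ 2 + b ^ 2 + c ^ 2 = m) (hbc : b % 2 = c % 2) : a % 2 ≠ b % 2 := by
  have := emod_two_add_emod_two_add_emod_two h
  omega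

abbrev Reps111TailSameParity (m : ℤ) :=
  {p : ℤ × ℤ × ℤ // p.1 ^ 2 + p.2.1 ^ 2 + p.2.2 ^ 2 = m ∧ p.2.1 % 2 = p.2.2 % 2}

def reps122Equiv (m : ℤ) : Reps122 m ≃ Reps111TailSameParity m where
  toFun := fun ⟨(x, y, z), h⟩ => ⟨(x, y + z, y - z), by linear_combination h, by dsimp only; omega⟩
  invFun := fun ⟨(a, b, c), h, hbc⟩ => ⟨(a, (b + c) / 2, (b - c) / 2), by
    dsimp only at h hbc
    obtain ⟨u, v, rfl, rfl⟩ : ∃ u v, b = u + v ∧ c = u - v :=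
      ⟨(b + c) / 2, (b - c) / 2, by omega, by omega⟩
    have hu : (u + v + (u - v)) / 2 = u := by omega
    have hv : (u + v - (u - v)) / 2 = v := by omega
    rw [hu, hv]
    linear_combination h⟩
  left_inv := by
    rintro ⟨⟨x, y, z⟩, _⟩
    ext <;> dsimp only <;> omega
  right_inv := by
    rintro ⟨⟨a, b, c⟩, _, hbc⟩
    dsimp only at hbc
    ext <;> dsimp only <;> omega

def insertAt {α : Type*} : Fin 3 → α × α × α → α × α × α
  | 0, (a, b, c) => (a, b, c)
  | 1, (a, b, c) => (b, a, c)
  | 2, (a, b, c) => (b, c, a)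

theorem insertAt_sq_add_sq_add_sq {R : Type*} [CommSemiring R] (i : Fin 3) (p : R × R × R) :
    (insertAt i p).1 ^ 2 + (insertAt i p).2.1 ^ 2 + (insertAt i p).2.2 ^ 2
      = p.1 ^ 2 + p.2.1 ^ 2 + p.2.2 ^ 2 := by
  fin_cases i <;> simp only [insertAt] <;> ring

def insertAtRep (m : ℤ) (q : Fin 3 × Reps111TailSameParity m) : Reps111 m :=
  ⟨insertAt q.1 q.2.1, by rw [insertAt_sq_add_sq_add_sq]; exact q.2.2.1⟩

theorem insertAtRep_injective {m : ℤ} (hm : m % 4 = 1 ∨ m % 4 = 2) :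
    Function.Injective (insertAtRep m) := by
  rintro ⟨i, ⟨⟨a, b, c⟩, h, hbc⟩⟩ ⟨j, ⟨⟨a', b', c'⟩, h', hbc'⟩⟩ heq
  have ha := emod_two_ne_of_sq_add_sq_add_sq hm h hbc
  have ha' := emod_two_ne_of_sq_add_sq_add_sq hm h' hbc'
  dsimp only at hbc hbc' ha ha'
  fin_cases i <;> fin_cases j <;>
    simp only [insertAtRep, insertAt, Subtype.mk.injEq, Prod.mk.injEq, Fin.zero_eta, Fin.mk_one,
      Fin.reduceFinMk, Fin.reduceEq, Fin.isValue, zero_ne_one, one_ne_zero, true_and,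
      false_and] at heq ⊢ <;>
    omega

theorem insertAtRep_surjective (m : ℤ) : Function.Surjective (insertAtRep m) := by
  rintro ⟨⟨a, b, c⟩, h⟩
  rcases (by omega : b % 2 = c % 2 ∨ a % 2 = c % 2 ∨ a % 2 = b % 2) with hbc | hac | hab
  · exact ⟨(0, ⟨(a, b, c), h, hbc⟩), rfl⟩
  · exact ⟨(1, ⟨(b, a, c), by linear_combination h, hac⟩), rfl⟩
  · exact ⟨(2, ⟨(c, a, b), by linear_combination h, hab⟩), rfl⟩

theorem three_mul_card_reps122 {m : ℤ} (hm : m % 4 = 1 ∨ m % 4 = 2) :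
    3 * Nat.card (Reps122 m) = Nat.card (Reps111 m) := by
  rw [← Nat.card_fin 3, Nat.card_congr (reps122Equiv m), ← Nat.card_prod]
  exact Nat.card_eq_of_bijective _ ⟨insertAtRep_injective hm, insertAtRep_surjective m⟩

theorem stmt10 (n : ℕ) :
    3 * Nat.card {p : ℤ × ℤ × ℤ // p.1^2 + 2*p.2.1^2 + 2*p.2.2^2 = (4*n+1 : ℤ)} = Nat.card {p : ℤ × ℤ × ℤ // p.1^2 + p.2.1^2 + p.2.2^2 = (4*n+1 : ℤ)} ∧
    3 * Nat.card {p : ℤ × ℤ × ℤ // p.1^2 + 2*p.2.1^2 + 2*p.2.2^2 = (4*n+2 : ℤ)} = Nat.card {p : ℤ × ℤ × ℤ // p.1^2 + p.2.1^2 + p.2.2^2 = (4*n+2 : ℤ)} :=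
  ⟨three_mul_card_reps122 (by omega), three_mul_card_reps122 (by omega)⟩
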